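/- arXiv:2404.00438 — 3 statements merged into one kernel-verified Lean document; each statement's English description precedes it below -/
import Mathlib

section
/- Let (X, Y) be a jointly distributed random variable on ℝ^d × ℝ^d and a > 0 a constant. Then E[⟨X, sign(X) - sign(Y)⟩] ≤ 2a√d · E[‖X/a - Y‖], where sign is applied coordinatewise and ‖·‖ is the Euclidean norm. -/
open MeasureTheory

/-- Coordinatewise sign of a vector in ℝ^d. -/
noncomputable def signVec {d : ℕ} (v : EuclideanSpace ℝ (Fin d)) : EuclideanSpace ℝ (Fin d) :=
  WithLp.toLp 2 (fun i => Real.sign (v i))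

lemma coordBound (a x y : ℝ) (ha : 0 < a) :
    x * (Real.sign x - Real.sign y) ≤ 2 * a * |a⁻¹ * x - y| := by
  have hinv : a * a⁻¹ = 1 := mul_inv_cancel₀ ha.ne'
  have habs1 : a⁻¹ * x - y ≤ |a⁻¹ * x - y| := le_abs_self _
  have habs2 : -(a⁻¹ * x - y) ≤ |a⁻¹ * x - y| := neg_le_abs _
  rcases lt_trichotomy x 0 with hx | hx | hx <;>
    rcases lt_trichotomy y 0 with hy | hy | hy <;>
      simp [Real.sign_of_pos, Real.sign_of_neg, Real.sign_zero, hx, hy, abs_of_pos ha] <;>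
        nlinarith [le_abs_self (a⁻¹ * x), neg_le_abs (a⁻¹ * x), abs_nonneg (a⁻¹ * x), abs_nonneg y,
            mul_inv_cancel_left₀ ha.ne' |x|, le_abs_self x, neg_le_abs x]

lemma l1_le_sqrt_norm {d : ℕ} (v : EuclideanSpace ℝ (Fin d)) :
    ∑ i, |v i| ≤ Real.sqrt d * ‖v‖ := by
  set w : EuclideanSpace ℝ (Fin d) := WithLp.toLp 2 fun i => Real.sign (v i) with hw
  have h1 : (inner ℝ w v : ℝ) = ∑ i, |v i| := by
    simp only [PiLp.inner_apply, RCLike.inner_apply, conj_trivial]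
    refine Finset.sum_congr rfl fun i _ => ?_
    rcases lt_trichotomy (v i) 0 with h | h | h <;>
      simp [hw, Real.sign_of_pos, Real.sign_of_neg, Real.sign_zero, h, abs_of_pos, abs_of_neg,
        h.le]
  have h2 : ‖w‖ ≤ Real.sqrt d := by
    rw [EuclideanSpace.norm_eq]
    refine Real.sqrt_le_sqrt ?_
    calc ∑ i, ‖w i‖ ^ 2 ≤ ∑ _i : Fin d, (1 : ℝ) := by
          refine Finset.sum_le_sum fun i _ => ?_
          have : |w i| ≤ 1 := by
            rcases lt_trichotomy (v i) 0 with h | h | h <;>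
              simp [hw, Real.sign_of_pos, Real.sign_of_neg, Real.sign_zero, h]
          calc ‖w i‖ ^ 2 = |w i| ^ 2 := by rw [Real.norm_eq_abs]
            _ ≤ 1 := by nlinarith [abs_nonneg (w i)]
      _ = d := by simp
  calc ∑ i, |v i| = (inner ℝ w v : ℝ) := h1.symm
    _ ≤ ‖w‖ * ‖v‖ := real_inner_le_norm w v
    _ ≤ Real.sqrt d * ‖v‖ := mul_le_mul_of_nonneg_right h2 (norm_nonneg v)

lemma ptwise {d : ℕ} (a : ℝ) (ha : 0 < a) (x y : EuclideanSpace ℝ (Fin d)) :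
    (inner ℝ x (signVec x - signVec y) : ℝ) ≤ 2 * a * Real.sqrt d * ‖a⁻¹ • x - y‖ := by
  have h1 : (inner ℝ x (signVec x - signVec y) : ℝ)
      = ∑ i, x i * (Real.sign (x i) - Real.sign (y i)) := by
    simp [PiLp.inner_apply, RCLike.inner_apply, signVec, mul_comm]
  rw [h1]
  calc ∑ i, x i * (Real.sign (x i) - Real.sign (y i))
      ≤ ∑ i, 2 * a * |a⁻¹ * x i - y i| :=
        Finset.sum_le_sum fun i _ => coordBound a (x i) (y i) ha
    _ = 2 * a * ∑ i, |(a⁻¹ • x - y) i| := by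
        rw [Finset.mul_sum]
        refine Finset.sum_congr rfl fun i _ => ?_
        simp [PiLp.sub_apply, PiLp.smul_apply, smul_eq_mul]
    _ ≤ 2 * a * (Real.sqrt d * ‖a⁻¹ • x - y‖) := by
        have := l1_le_sqrt_norm (a⁻¹ • x - y)
        nlinarith [ha.le]
    _ = 2 * a * Real.sqrt d * ‖a⁻¹ • x - y‖ := by ring

theorem expectation_inner_sign_diff_le
    {Ω : Type*} [MeasurableSpace Ω] (μ : Measure Ω) [IsProbabilityMeasure μ]
    {d : ℕ} (X Y : Ω → EuclideanSpace ℝ (Fin d))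
    (hX : Integrable X μ) (hY : Integrable Y μ)
    (a : ℝ) (ha : 0 < a)
    (hint : Integrable (fun ω => (inner ℝ (X ω) (signVec (X ω) - signVec (Y ω)) : ℝ)) μ)
    (hint2 : Integrable (fun ω => ‖a⁻¹ • X ω - Y ω‖) μ) :
    (∫ ω, (inner ℝ (X ω) (signVec (X ω) - signVec (Y ω)) : ℝ) ∂μ)
      ≤ 2 * a * Real.sqrt d * ∫ ω, ‖a⁻¹ • X ω - Y ω‖ ∂μ := by
  rw [← integral_const_mul]
  exact integral_mono hint (hint2.const_mul _) fun ω => ptwise a ha (X ω) (Y ω)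
end

section
/- Let f: ℝ^d → ℝ be continuously differentiable, λ > 0, and x ∈ ℝ^d with ‖λx‖_∞ ≤ 1. If S(x) = ⟨∇f(x), sign(∇f(x)) + λx⟩ = 0, then x satisfies the first-order KKT conditions of the problem min f(x) subject to ‖λx‖_∞ ≤ 1; that is, there exist μ, μ̃ ∈ ℝ^d with μ, μ̃ ≥ 0 such that for each coordinate i: ∂_{x_i} f(x) + μ_i λ - μ̃_i λ = 0, μ_i(λx_i - 1) = 0, and μ̃_i(-λx_i - 1) = 0. -/
theorem kkt_score_zero_implies_kkt
    {d : ℕ} (f : EuclideanSpace ℝ (Fin d) → ℝ) (hf : ContDiff ℝ 1 f)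
    (l : ℝ) (hl : 0 < l) (x : EuclideanSpace ℝ (Fin d))
    (hbox : ∀ i, |l * x i| ≤ 1)
    (hS : (inner ℝ (gradient f x) (signVec (gradient f x) + l • x) : ℝ) = 0) :
    ∃ mu mu2 : Fin d → ℝ,
      (∀ i, 0 ≤ mu i) ∧ (∀ i, 0 ≤ mu2 i) ∧
      (∀ i, gradient f x i + mu i * l - mu2 i * l = 0) ∧
      (∀ i, mu i * (l * x i - 1) = 0) ∧
      (∀ i, mu2 i * (-(l * x i) - 1) = 0) := by
  set g := gradient f x with hg
  have hsum : ∑ i, (|g i| + g i * (l * x i)) = 0 := by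
    rw [← hS, PiLp.inner_apply]
    refine Finset.sum_congr rfl fun i _ => ?_
    have h1 : (signVec g + l • x) i = Real.sign (g i) + l * x i := by
      simp [signVec, PiLp.add_apply, PiLp.smul_apply, smul_eq_mul]
    have h2 : g i * Real.sign (g i) = |g i| := by
      rcases lt_trichotomy (g i) 0 with h | h | h
      · rw [Real.sign_of_neg h, abs_of_neg h]; ring
      · simp [h]
      · rw [Real.sign_of_pos h, abs_of_pos h]; ring
    simp only [RCLike.inner_apply, conj_trivial, h1]
    rw [add_mul, mul_comm (Real.sign _), h2, mul_comm (l * x i)]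
  have hnn : ∀ i ∈ Finset.univ, 0 ≤ |g i| + g i * (l * x i) := by
    intro i _
    have : |g i * (l * x i)| ≤ |g i| := by
      rw [abs_mul]
      calc |g i| * |l * x i| ≤ |g i| * 1 := by
            exact mul_le_mul_of_nonneg_left (hbox i) (abs_nonneg _)
        _ = |g i| := mul_one _
    nlinarith [neg_abs_le (g i * (l * x i))]
  have hzero : ∀ i, |g i| + g i * (l * x i) = 0 := by
    intro i
    exact (Finset.sum_eq_zero_iff_of_nonneg hnn).mp hsum i (Finset.mem_univ i)
  refine ⟨fun i => max (-(g i)) 0 / l, fun i => max (g i) 0 / l, 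
    fun i => div_nonneg (le_max_right _ _) hl.le,
    fun i => div_nonneg (le_max_right _ _) hl.le, ?_, ?_, ?_⟩
  · intro i
    dsimp only
    rcases lt_trichotomy (g i) 0 with h | h | h
    · rw [max_eq_left (by linarith), max_eq_right h.le]
      field_simp
      ring
    · simp [h]
    · rw [max_eq_right (by linarith), max_eq_left h.le]
      field_simp
      ring
  · intro i
    dsimp only
    rcases lt_trichotomy (g i) 0 with h | h | h
    · have := hzero i
      rw [abs_of_neg h] at this
      have hx : l * x i = 1 := by
        have : g i * (l * x i - 1) = 0 := by linarith
        rcases mul_eq_zero.mp this with h' | h'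
        · exact absurd h' h.ne
        · linarith
      rw [hx]; ring
    · simp [h]
    · rw [max_eq_right (by linarith)]; simp
  · intro i
    dsimp only
    rcases lt_trichotomy (g i) 0 with h | h | h
    · rw [max_eq_right h.le]; simp
    · simp [h]
    · have := hzero i
      rw [abs_of_pos h] at this
      have hx : l * x i = -1 := by
        have : g i * (l * x i + 1) = 0 := by linarith
        rcases mul_eq_zero.mp this with h' | h'
        · exact absurd h' h.ne'
        · linarith
      rw [hx]; ring
end

section
/- Consider a sequence x_t in ℝ^d satisfying x_{t+1} = (1 - ελ)x_t - εΔ_t where ε, λ > 0, 1 - ελ ∈ (0,1), and each Δ_t satisfies ‖Δ_t‖_∞ ≤ 1. Let F = {x : ‖λx‖_∞ ≤ 1} and dist(x, F) = inf_{z ∈ F} ‖z - x‖ for any norm ‖·‖. Then for all nonnegative integers s ≤ t, dist(x_t, F) ≤ (1 - ελ)^{t-s} dist(x_s, F). -/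
theorem phase_one_contraction
    {d : ℕ} (eps l : ℝ) (heps : 0 < eps) (hl : 0 < l)
    (h1 : 1 - eps * l ∈ Set.Ioo (0 : ℝ) 1)
    (x Δ : ℕ → EuclideanSpace ℝ (Fin d))
    (hΔ : ∀ t, ∀ k, |Δ t k| ≤ 1)
    (hupd : ∀ t, x (t + 1) = (1 - eps * l) • x t - eps • Δ t)
    (F : Set (EuclideanSpace ℝ (Fin d)))
    (hF : F = {y | ∀ k, |l * y k| ≤ 1})
    (N : Seminorm ℝ (EuclideanSpace ℝ (Fin d)))
    (distF : EuclideanSpace ℝ (Fin d) → ℝ)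
    (hdist : ∀ y, distF y = ⨅ z : F, N ((z : EuclideanSpace ℝ (Fin d)) - y))
    (s t : ℕ) (hst : s ≤ t) :
    distF (x t) ≤ (1 - eps * l) ^ (t - s) * distF (x s) := by
  set c : ℝ := 1 - eps * l with hc
  obtain ⟨hc0, hc1⟩ := h1
  have hF0 : (0 : EuclideanSpace ℝ (Fin d)) ∈ F := by
    rw [hF]; intro k; simp
  have hne : Nonempty F := ⟨⟨0, hF0⟩⟩
  have hbdd : ∀ y, BddBelow (Set.range fun z : F => (N ((z : EuclideanSpace ℝ (Fin d)) - y) : ℝ)) := by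
    intro y
    exact ⟨0, by rintro _ ⟨z, rfl⟩; exact apply_nonneg N _⟩
  -- one step contraction
  have step : ∀ u : ℕ, distF (x (u + 1)) ≤ c * distF (x u) := by
    intro u
    rw [hdist, hdist, Real.mul_iInf_of_nonneg hc0.le]
    refine le_ciInf fun z => ?_
    set z' : EuclideanSpace ℝ (Fin d) := c • (z : EuclideanSpace ℝ (Fin d)) - eps • Δ u with hz'
    have hz'F : z' ∈ F := by
      rw [hF]
      intro k
      have hz1 : |l * (z : EuclideanSpace ℝ (Fin d)) k| ≤ 1 := by
        have hz2 := z.2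
        simp only [hF, Set.mem_setOf_eq] at hz2
        exact hz2 k
      have heq : l * z' k = c * (l * (z : EuclideanSpace ℝ (Fin d)) k) - (eps * l) * Δ u k := by
        simp [hz', z']
        ring
      have e1 : |c * (l * (z : EuclideanSpace ℝ (Fin d)) k)| ≤ c * 1 := by
        rw [abs_mul, abs_of_nonneg hc0.le]
        exact mul_le_mul_of_nonneg_left hz1 hc0.le
      have e2 : |(eps * l) * Δ u k| ≤ (eps * l) * 1 := by
        rw [abs_mul, abs_of_nonneg (mul_pos heps hl).le]
        exact mul_le_mul_of_nonneg_left (hΔ u k) (mul_pos heps hl).le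
      have habs := abs_sub (c * (l * (z : EuclideanSpace ℝ (Fin d)) k)) ((eps * l) * Δ u k)
      rw [heq]
      linarith
    have key : N (z' - x (u + 1)) = c * N ((z : EuclideanSpace ℝ (Fin d)) - x u) := by
      have : z' - x (u + 1) = c • ((z : EuclideanSpace ℝ (Fin d)) - x u) := by
        rw [hupd u, hz']
        module
      rw [this, map_smul_eq_mul, Real.norm_eq_abs, abs_of_nonneg hc0.le]
    calc (⨅ w : F, (N ((w : EuclideanSpace ℝ (Fin d)) - x (u + 1)) : ℝ))
        ≤ N ((⟨z', hz'F⟩ : F).1 - x (u + 1)) := ciInf_le (hbdd _) _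
      _ = c * N ((z : EuclideanSpace ℝ (Fin d)) - x u) := key
  -- distF nonneg
  have hnn : ∀ y, 0 ≤ distF y := by
    intro y
    rw [hdist]
    exact le_ciInf fun z => apply_nonneg N _
  -- induction
  induction t, hst using Nat.le_induction with
  | base => simp
  | succ t hst ih =>
    calc distF (x (t + 1)) ≤ c * distF (x t) := step t
      _ ≤ c * (c ^ (t - s) * distF (x s)) := by
          exact mul_le_mul_of_nonneg_left ih hc0.le
      _ = c ^ (t + 1 - s) * distF (x s) := by
          rw [Nat.succ_sub hst, pow_succ]
          ring
end
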